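/- arXiv:2603.07284 — 3 statements merged into one kernel-verified Lean document; each statement's English description precedes it below -/
import Mathlib

section
/- For every n ≥ 0, the polynomial identity ∑_{k=0}^{n} t^k · p_n(k) = n! · ∑_{i=0}^{n} (t−1)^i / i! holds in ℚ[t]. -/
/-!
Writing `t = (t - 1) + 1` and expanding `t ^ #Fix σ` binomially, the coefficient of `(t - 1) ^ i`
in `∑ σ, t ^ #Fix σ` is `∑ σ, (#Fix σ).choose i`, the number of pairs `(σ, S)` with `S` an
`i`-set of fixed points of `σ`. Counting by `S` first gives `n.choose i * (n - i)! = n! / i!`.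
-/

open Finset

/-- `p n k` : number of permutations of `{1,...,n}` with exactly `k` fixed points. -/
def p (n k : ℕ) : ℕ :=
  Fintype.card {σ : Equiv.Perm (Fin n) // (Finset.univ.filter fun x => σ x = x).card = k}

open Equiv Nat

section FixedPoints

variable {α : Type*} [Fintype α] [DecidableEq α]

theorem card_perm_fixing_pointwise (S : Finset α) :
    #{σ : Perm α | ∀ x ∈ S, σ x = x} = (Fintype.card α - #S)! := by
  rw [← Fintype.card_subtype, Fintype.card_congr ((subtypeEquivRight fun σ => ?_).trans
    (Perm.subtypeEquivSubtypePerm (· ∉ S)).symm), Fintype.card_perm, Fintype.card_subtype_compl,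
    Fintype.card_coe]
  simp only [not_not]

theorem sum_choose_card_fixedPoints (i : ℕ) :
    ∑ σ : Perm α, (#{x | σ x = x}).choose i =
      (Fintype.card α).choose i * (Fintype.card α - i)! := by
  have hchoose (σ : Perm α) : (#{x | σ x = x}).choose i =
      #{S ∈ powersetCard i (univ : Finset α) | ∀ x ∈ S, σ x = x} := by
    rw [← card_powersetCard]
    congr 1
    ext S
    simp [mem_powersetCard, subset_iff, and_comm]
  have hfix (S : Finset α) (hS : S ∈ powersetCard i (univ : Finset α)) :
      #{σ : Perm α | ∀ x ∈ S, σ x = x} = (Fintype.card α - i)! := by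
    rw [card_perm_fixing_pointwise, mem_powersetCard_univ.1 hS]
  calc ∑ σ : Perm α, (#{x | σ x = x}).choose i
      = ∑ S ∈ powersetCard i univ, #{σ : Perm α | ∀ x ∈ S, σ x = x} := by
        simp_rw [hchoose]
        exact sum_card_bipartiteAbove_eq_sum_card_bipartiteBelow _
    _ = (Fintype.card α).choose i * (Fintype.card α - i)! := by
        rw [sum_congr rfl hfix, sum_const, card_powersetCard, Finset.card_univ, smul_eq_mul]

theorem pow_eq_sum_choose_mul_sub_one_pow {R : Type*} [CommRing R] (x : R) {m N : ℕ}
    (hm : m ≤ N) : x ^ m = ∑ i ∈ range (N + 1), (m.choose i : R) * (x - 1) ^ i := by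
  conv_lhs => rw [← sub_add_cancel x 1, add_pow]
  refine (sum_subset (range_subset_range.2 (succ_le_succ hm)) fun i _ hi => ?_).trans ?_
  · rw [choose_eq_zero_of_lt (by simpa using hi)]; simp
  · exact sum_congr rfl fun i _ => by ring

theorem sum_pow_card_fixedPoints {R : Type*} [CommRing R] (x : R) :
    ∑ σ : Perm α, x ^ #{x | σ x = x} = ∑ i ∈ range (Fintype.card α + 1),
      (((Fintype.card α).choose i * (Fintype.card α - i)! : ℕ) : R) * (x - 1) ^ i := by
  simp_rw [fun σ : Perm α => pow_eq_sum_choose_mul_sub_one_pow x (card_le_univ {x | σ x = x}),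
    sum_comm (s := univ), ← sum_mul, ← sum_choose_card_fixedPoints, Nat.cast_sum]

end FixedPoints

theorem cast_choose_mul_factorial_sub {K : Type*} [Field K] [CharZero K] {i n : ℕ} (h : i ≤ n) :
    ((n.choose i * (n - i)! : ℕ) : K) = n ! * (i ! : K)⁻¹ := by
  rw [Nat.cast_mul, cast_choose K h, div_mul_eq_mul_div,
    mul_div_mul_right _ _ (cast_ne_zero.2 (factorial_ne_zero _)), div_eq_mul_inv]

theorem sum_p_mul_eq_sum_perm {R : Type*} [CommSemiring R] (n : ℕ) (f : ℕ → R) :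
    ∑ k ∈ range (n + 1), (p n k : R) * f k = ∑ σ : Perm (Fin n), f #{x | σ x = x} := by
  rw [← sum_fiberwise_of_maps_to (g := fun σ : Perm (Fin n) => #{x | σ x = x})
    fun σ _ => mem_range_succ_iff.2 ((card_le_univ _).trans_eq (Fintype.card_fin n))]
  refine sum_congr rfl fun k _ => ?_
  rw [sum_congr rfl fun σ hσ => by rw [(mem_filter.1 hσ).2], sum_const, nsmul_eq_mul, p,
    Fintype.card_subtype]

open Polynomial in
theorem stmt11 (n : ℕ) :
    (∑ k ∈ Finset.range (n + 1), (p n k : ℚ[X]) * Polynomial.X ^ k) =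
      Polynomial.C (n.factorial : ℚ) *
        ∑ i ∈ Finset.range (n + 1),
          Polynomial.C ((i.factorial : ℚ))⁻¹ * (Polynomial.X - 1) ^ i := by
  rw [sum_p_mul_eq_sum_perm n (X ^ ·), sum_pow_card_fixedPoints, Fintype.card_fin, mul_sum]
  refine sum_congr rfl fun i hi => ?_
  rw [← mul_assoc, ← C_mul, ← cast_choose_mul_factorial_sub (mem_range_succ_iff.1 hi), C_eq_natCast]
end

section
/- For all integers n, r with 0 ≤ r ≤ n−2, ∑_{k=0}^{n} ∑_{i=0}^{r+1} s(r+1,i) · k^i · p_n(k) = n!, where s(q,i) is the signed Stirling number of the first kind. -/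
/-!
Since `∑ i, s(q, i) k^i = k(k-1)⋯(k-q+1)`, the left-hand side is `∑_σ (fix σ)_{r+1}`, the sum over
`σ ∈ Sₙ` of the falling factorial of its number of fixed points. That falling factorial counts the
injective `(r+1)`-tuples fixed by `σ`, so by Burnside's lemma the sum is `n!` times the number of
orbits of `Sₙ` on injective `(r+1)`-tuples, and there is only one orbit as `r + 1 ≤ n`.
-/

open Finset

/-- Signed Stirling numbers of the first kind:
`x(x-1)⋯(x-q+1) = ∑ i, s1 q i * x^i`. -/
noncomputable def s1 (q i : ℕ) : ℤ := (descPochhammer ℤ q).coeff i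

open MulAction

theorem sum_range_s1_mul_pow (q : ℕ) (x : ℤ) :
    ∑ i ∈ range (q + 1), s1 q i * x ^ i = (descPochhammer ℤ q).eval x := by
  rw [Polynomial.eval_eq_sum_range' (n := q + 1) (by rw [descPochhammer_natDegree]; omega)]
  rfl

def Function.Embedding.fixedByEquiv {G α ι : Type*} [Group G] [MulAction G α] (g : G) :
    fixedBy (ι ↪ α) g ≃ (ι ↪ fixedBy α g) where
  toFun f := ⟨fun i => ⟨f.1 i, congr($(f.2) i)⟩, fun _ _ h => f.1.injective congr(($h).1)⟩
  invFun f := ⟨f.trans (Function.Embedding.subtype _), Function.Embedding.ext fun i => (f i).2⟩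
  left_inv _ := rfl
  right_inv _ := rfl

theorem card_fixedBy_embedding {G α ι : Type*} [Group G] [MulAction G α] [Fintype ι] (g : G)
    [Fintype (fixedBy α g)] [Fintype (fixedBy (ι ↪ α) g)] :
    Fintype.card (fixedBy (ι ↪ α) g) =
      (Fintype.card (fixedBy α g)).descFactorial (Fintype.card ι) := by
  rw [Fintype.card_congr (Function.Embedding.fixedByEquiv g), Fintype.card_embedding_eq]

theorem Equiv.Perm.sum_descFactorial_card_fixedPoints {α : Type*} [Fintype α] [DecidableEq α]
    {m : ℕ} (hm : m ≤ Fintype.card α) :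
    ∑ σ : Equiv.Perm α, (#{x | σ x = x}).descFactorial m = (Fintype.card α).factorial := by
  have := Equiv.Perm.isMultiplyPretransitive α m
  have : Nonempty (Fin m ↪ α) := Function.Embedding.nonempty_of_card_le (by simpa using hm)
  have : Unique (orbitRel.Quotient (Equiv.Perm α) (Fin m ↪ α)) :=
    ((pretransitive_iff_unique_quotient_of_nonempty _ _).mp ‹_›).some
  have burnside := sum_card_fixedBy_eq_card_orbits_mul_card_group (Equiv.Perm α) (Fin m ↪ α)
  rw [Fintype.card_unique, one_mul, Fintype.card_perm] at burnside
  rw [← burnside]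
  refine sum_congr rfl fun σ _ => ?_
  rw [card_fixedBy_embedding, Fintype.card_fin, Fintype.card_subtype]
  rfl

theorem sum_p_mul_descFactorial {n m : ℕ} (hm : m ≤ n) :
    ∑ k ∈ range (n + 1), p n k * k.descFactorial m = n.factorial := by
  have hmaps : ∀ σ ∈ (univ : Finset (Equiv.Perm (Fin n))), #{x | σ x = x} ∈ range (n + 1) :=
    fun σ _ => mem_range_succ_iff.mpr ((card_filter_le _ _).trans_eq (card_fin n))
  calc ∑ k ∈ range (n + 1), p n k * k.descFactorial m
      = ∑ k ∈ range (n + 1), ∑ σ : Equiv.Perm (Fin n) with #{x | σ x = x} = k,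
          k.descFactorial m := by
        simp only [p, Fintype.card_subtype, sum_const, smul_eq_mul]
    _ = ∑ σ : Equiv.Perm (Fin n), (#{x | σ x = x}).descFactorial m :=
        sum_fiberwise_of_maps_to' hmaps _
    _ = n.factorial := by
        rw [Equiv.Perm.sum_descFactorial_card_fixedPoints (by simpa using hm), Fintype.card_fin]

theorem stmt13 (n r : ℕ) (hr : r + 2 ≤ n) :
    ∑ k ∈ Finset.range (n + 1), ∑ i ∈ Finset.range (r + 2),
        s1 (r + 1) i * (k : ℤ) ^ i * p n k = n.factorial := by
  simp_rw [← sum_mul, sum_range_s1_mul_pow, descPochhammer_eval_eq_descFactorial]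
  have h := sum_p_mul_descFactorial (n := n) (m := r + 1) (by omega)
  simp_rw [mul_comm (p n _)] at h
  exact_mod_cast h
end

section
/- For all natural numbers q and n with n ≥ max(q,1), n! · B_q = ∑_{k=0}^{n} ∑_{l=0}^{⌊(k−1)q/k⌋} ∑_{i=0}^{n−k} (−1)^{l+i} · (n!/(k! i!)) · C(q,l) · C(k(q−l), q), as an identity of rational numbers. -/
open Finset

/-- Bell number: number of partitions of a set with `q` elements. -/
def Bell (q : ℕ) : ℕ := Fintype.card (Finpartition (Finset.univ : Finset (Fin q)))

/-!
For `q ≤ n`, `n! * B_q = ∑_σ (#fix σ)^q`, the sum over permutations `σ` of `n` points: both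
sides count pairs `(σ, f)` with `f : [q] → [n]` and `σ` fixing the image of `f`, and grouping
the maps `f` by their kernel partition `P`, each `P` contributes `n^{(#P)} * (n - #P)! = n!`,
where `n^{(m)}` is the falling factorial. Grouping `σ` by its number `k` of fixed points instead
gives `∑_k k^q * C(n,k) * D_{n-k}`. Finally `D_{n-k}` is expanded by the alternating factorial sum
and `k^q` as the coefficient of `X^q` in `((1 + X)^k - 1)^q`, whose terms with
`l > (k-1)q/k` vanish because then `k(q-l) < q`.
-/

open Polynomial in
theorem sum_neg_one_pow_mul_choose_mul_choose_eq_pow {R : Type*} [CommRing R] (k q : ℕ) :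
    ∑ l ∈ range (q + 1), (-1 : R) ^ l * q.choose l * (k * (q - l)).choose q = (k : R) ^ q := by
  have hexpand : ((1 + X : R[X]) ^ k - 1) ^ q =
      ∑ l ∈ range (q + 1), C ((-1 : R) ^ l * q.choose l) * (1 + X) ^ (k * (q - l)) := by
    rw [sub_eq_neg_add, add_pow]
    refine sum_congr rfl fun l _ => ?_
    rw [pow_mul, map_mul, map_pow, map_neg, map_one, map_natCast]
    ring
  have hgeom : (1 + X : R[X]) ^ k - 1 = (∑ i ∈ range k, (1 + X) ^ i) * X := by
    rw [← geom_sum_mul, add_sub_cancel_left]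
  calc ∑ l ∈ range (q + 1), (-1 : R) ^ l * q.choose l * (k * (q - l)).choose q
      = (((1 + X : R[X]) ^ k - 1) ^ q).coeff q := by
        simp only [hexpand, finsetSum_coeff, coeff_C_mul, coeff_one_add_X_pow, mul_assoc]
    _ = (k : R) ^ q := by
        rw [hgeom, mul_pow, coeff_mul_X_pow', if_pos le_rfl, Nat.sub_self, coeff_zero_eq_eval_zero]
        simp [eval_finsetSum]

theorem mul_sub_lt_of_div_lt {k q l : ℕ} (hl : (k - 1) * q / k < l) (hlq : l ≤ q) :
    k * (q - l) < q := by
  rcases k with _ | m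
  · omega
  · have h := (Nat.div_lt_iff_lt_mul (Nat.succ_pos m)).1 hl
    simp only [Nat.add_sub_cancel] at h
    zify [hlq] at h ⊢
    nlinarith

theorem truncated_sum_neg_one_pow_mul_choose_mul_choose_eq_pow {R : Type*} [CommRing R]
    (k q : ℕ) :
    ∑ l ∈ range ((k - 1) * q / k + 1), (-1 : R) ^ l * q.choose l * (k * (q - l)).choose q =
      (k : R) ^ q := by
  rw [← sum_neg_one_pow_mul_choose_mul_choose_eq_pow]
  refine sum_subset (range_subset_range.2 (Nat.succ_le_succ ?_)) fun l hl hl' => ?_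
  · exact Nat.div_le_of_le_mul (Nat.mul_le_mul_right q (Nat.sub_le k 1))
  · simp only [mem_range, not_lt] at hl hl'
    simp [Nat.choose_eq_zero_of_lt (mul_sub_lt_of_div_lt hl' (by omega))]

open Nat in
theorem numDerangements_eq_sum_factorial_div (m : ℕ) :
    (numDerangements m : ℚ) = ∑ i ∈ range (m + 1), (-1 : ℚ) ^ i * (m ! / i !) := by
  have h := congrArg (Int.cast : ℤ → ℚ) (numDerangements_sum m)
  push_cast at h
  rw [h]
  refine sum_congr rfl fun i hi => ?_
  have hi : i ≤ m := Nat.lt_succ_iff.1 (mem_range.1 hi)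
  have hfac : (i ! : ℚ) * (i + 1).ascFactorial (m - i) = m ! := by
    exact_mod_cast (Nat.add_sub_cancel' hi) ▸ Nat.factorial_mul_ascFactorial i (m - i)
  rw [← hfac, mul_div_cancel_left₀ _ (by positivity)]

open Nat in
theorem choose_mul_numDerangements_eq_sum {n k : ℕ} (hk : k ≤ n) :
    (n.choose k : ℚ) * numDerangements (n - k) =
      ∑ i ∈ range (n - k + 1), (-1 : ℚ) ^ i * (n ! / (k ! * i !)) := by
  rw [numDerangements_eq_sum_factorial_div, mul_sum, Nat.cast_choose ℚ hk]
  refine sum_congr rfl fun i _ => ?_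
  field_simp

section Permutations

open Equiv

variable {α : Type*} [Fintype α] [DecidableEq α]

theorem card_filter_fixed_eq_numDerangements (S : Finset α) :
    #{σ : Perm α | ({x | σ x = x} : Finset α) = S} =
      numDerangements (Fintype.card α - #S) := by
  rw [← Fintype.card_subtype, ← Fintype.card_coe S, ← Fintype.card_subtype_compl,
    ← card_derangements_eq_numDerangements]
  refine Fintype.card_congr ((Equiv.subtypeEquivRight fun σ => ?_).trans
    (derangements.subtypeEquiv (· ∉ S)).symm)
  simp [Finset.ext_iff, Function.IsFixedPt, iff_comm]

theorem sum_perm_comp_card_fixed {M : Type*} [AddCommMonoid M] (g : ℕ → M) :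
    ∑ σ : Perm α, g #{x | σ x = x} = ∑ k ∈ range (Fintype.card α + 1),
      ((Fintype.card α).choose k * numDerangements (Fintype.card α - k)) • g k := by
  rw [← sum_fiberwise univ (fun σ : Perm α => ({x | σ x = x} : Finset α))]
  have hfiber (S : Finset α) : ∑ σ ∈ {σ : Perm α | ({x | σ x = x} : Finset α) = S},
      g #{x | σ x = x} = numDerangements (Fintype.card α - #S) • g #S := by
    rw [sum_congr rfl fun σ hσ => by rw [(mem_filter.1 hσ).2], sum_const,
      card_filter_fixed_eq_numDerangements]
  simp only [hfiber, mul_smul, ← powerset_univ]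
  rw [sum_powerset_apply_card (fun k => numDerangements (Fintype.card α - k) • g k), card_univ]

theorem card_filter_fixing_eq_factorial (T : Finset α) :
    #{σ : Perm α | ∀ x ∈ T, σ x = x} = (Fintype.card α - #T).factorial := by
  rw [← Fintype.card_subtype, ← Fintype.card_coe T, ← Fintype.card_subtype_compl,
    ← Fintype.card_perm]
  exact Fintype.card_congr ((Perm.subtypeEquivSubtypePerm (· ∉ T)).trans
    (Equiv.subtypeEquivRight fun σ => by simp)).symm

variable {ι : Type*} [Fintype ι] [DecidableEq ι]

theorem sum_card_fixed_pow_eq_sum_factorial :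
    ∑ σ : Perm α, #{x | σ x = x} ^ Fintype.card ι =
      ∑ f : ι → α, (Fintype.card α - #(univ.image f)).factorial := by
  have hpow (σ : Perm α) :
      #{x | σ x = x} ^ Fintype.card ι = #{f : ι → α | ∀ i, σ (f i) = f i} := by
    rw [← card_univ, ← prod_const, ← Fintype.card_piFinset]
    congr 1
    ext f
    simp [Fintype.mem_piFinset]
  have hfix (f : ι → α) :
      (Fintype.card α - #(univ.image f)).factorial = #{σ : Perm α | ∀ i, σ (f i) = f i} := by
    rw [← card_filter_fixing_eq_factorial]
    simp
  simp_rw [hpow, hfix, card_filter]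
  exact sum_comm

end Permutations

namespace Finpartition

variable {α ι : Type*} [DecidableEq α] [Fintype ι] [DecidableEq ι]

theorem eq_of_forall_part_eq {P Q : Finpartition (univ : Finset ι)}
    (h : ∀ a, P.part a = Q.part a) : P = Q := by
  ext t
  constructor
  · intro ht
    obtain ⟨a, -, rfl⟩ := P.part_surjOn ht
    exact h a ▸ Q.part_mem.2 (mem_univ a)
  · intro ht
    obtain ⟨a, -, rfl⟩ := Q.part_surjOn ht
    exact (h a).symm ▸ P.part_mem.2 (mem_univ a)

def partOf (P : Finpartition (univ : Finset ι)) (a : ι) : P.parts :=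
  ⟨P.part a, P.part_mem.2 (mem_univ a)⟩

theorem partOf_surjective (P : Finpartition (univ : Finset ι)) : Function.Surjective P.partOf :=
  fun t => by
    obtain ⟨a, -, ha⟩ := P.part_surjOn t.2
    exact ⟨a, Subtype.ext ha⟩

theorem partOf_eq_partOf_iff (P : Finpartition (univ : Finset ι)) {a b : ι} :
    P.partOf a = P.partOf b ↔ P.part a = P.part b :=
  Subtype.ext_iff

def ker (f : ι → α) : Finpartition (univ : Finset ι) :=
  @ofSetoid _ _ _ (Setoid.ker f) fun a b => decEq (f a) (f b)

theorem ker_eq_iff {f : ι → α} {P : Finpartition (univ : Finset ι)} :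
    ker f = P ↔ ∀ a b, f a = f b ↔ P.part a = P.part b := by
  have hmem (a b : ι) : b ∈ (ker f).part a ↔ f a = f b :=
    mem_part_ofSetoid_iff_rel
  constructor
  · rintro rfl a b
    rw [← hmem, (ker f).mem_part_iff_part_eq_part (mem_univ b) (mem_univ a), eq_comm]
  · intro h
    refine eq_of_forall_part_eq fun a => ?_
    ext b
    rw [hmem, h, P.mem_part_iff_part_eq_part (mem_univ b) (mem_univ a), eq_comm]

theorem ker_comp_partOf (P : Finpartition (univ : Finset ι)) (g : P.parts ↪ α) :
    ker (g ∘ P.partOf) = P :=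
  ker_eq_iff.2 fun _ _ => g.injective.eq_iff.trans P.partOf_eq_partOf_iff

theorem exists_embedding_comp_partOf {f : ι → α} {P : Finpartition (univ : Finset ι)}
    (hf : ker f = P) : ∃ g : P.parts ↪ α, g ∘ P.partOf = f := by
  rw [ker_eq_iff] at hf
  set s := Function.surjInv P.partOf_surjective
  have hs (a : ι) : f (s (P.partOf a)) = f a :=
    (hf _ _).2 ((P.partOf_eq_partOf_iff).1 (Function.surjInv_eq P.partOf_surjective _))
  refine ⟨⟨f ∘ s, fun t t' htt => ?_⟩, funext hs⟩
  rw [← Function.surjInv_eq P.partOf_surjective t, ← Function.surjInv_eq P.partOf_surjective t',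
    P.partOf_eq_partOf_iff]
  exact (hf _ _).1 htt

theorem card_subtype_ker_eq [Fintype α] (P : Finpartition (univ : Finset ι)) :
    Fintype.card {f : ι → α // ker f = P} =
      (Fintype.card α).descFactorial #P.parts := by
  rw [← Fintype.card_coe P.parts, ← Fintype.card_embedding_eq]
  refine (Fintype.card_of_bijective (f := fun g => ⟨g ∘ P.partOf, P.ker_comp_partOf g⟩)
    ⟨fun g g' hgg => ?_, fun ⟨f, hf⟩ => ?_⟩).symm
  · exact DFunLike.ext' (P.partOf_surjective.injective_comp_right (congrArg Subtype.val hgg))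
  · obtain ⟨g, rfl⟩ := exists_embedding_comp_partOf hf
    exact ⟨g, rfl⟩

theorem card_image_of_ker_eq {f : ι → α} {P : Finpartition (univ : Finset ι)}
    (hf : ker f = P) : #(univ.image f) = #P.parts := by
  obtain ⟨g, rfl⟩ := exists_embedding_comp_partOf hf
  rw [← image_image, image_univ_of_surjective P.partOf_surjective,
    card_image_of_injective _ g.injective, card_univ, Fintype.card_coe]

end Finpartition

open Finpartition in
theorem sum_factorial_sub_card_image {α ι : Type*} [Fintype α] [DecidableEq α] [Fintype ι]
    [DecidableEq ι] (h : Fintype.card ι ≤ Fintype.card α) :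
    ∑ f : ι → α, (Fintype.card α - #(univ.image f)).factorial =
      (Fintype.card α).factorial * Fintype.card (Finpartition (univ : Finset ι)) := by
  have hfiber (P : Finpartition (univ : Finset ι)) :
      ∑ f ∈ {f : ι → α | ker f = P}, (Fintype.card α - #(univ.image f)).factorial =
        (Fintype.card α).factorial := by
    rw [sum_congr rfl fun f hf => by rw [card_image_of_ker_eq (mem_filter.1 hf).2],
      sum_const, ← Fintype.card_subtype, card_subtype_ker_eq, smul_eq_mul, mul_comm,
      Nat.factorial_mul_descFactorial (P.card_parts_le_card.trans (by simpa using h))]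
  rw [← sum_fiberwise univ ker, sum_congr rfl fun P _ => hfiber P, sum_const, card_univ,
    smul_eq_mul, mul_comm]

open Nat in
theorem stmt19 (q n : ℕ) (h : max q 1 ≤ n) :
    (n.factorial : ℚ) * Bell q =
      ∑ k ∈ Finset.range (n + 1), ∑ l ∈ Finset.range ((k - 1) * q / k + 1),
        ∑ i ∈ Finset.range (n - k + 1),
          (-1 : ℚ) ^ (l + i) * ((n.factorial : ℚ) / (k.factorial * i.factorial)) *
            q.choose l * ((k * (q - l)).choose q) := by
  have hqn : Fintype.card (Fin q) ≤ Fintype.card (Fin n) := by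
    simpa using le_of_max_le_left h
  have hcount : n ! * Bell q =
      ∑ k ∈ range (n + 1), (n.choose k * numDerangements (n - k)) * k ^ q :=
    calc n ! * Bell q = ∑ f : Fin q → Fin n, (n - #(univ.image f))! := by
          simpa [Bell] using (sum_factorial_sub_card_image hqn).symm
      _ = ∑ σ : Equiv.Perm (Fin n), #{x | σ x = x} ^ q := by
          simpa using (sum_card_fixed_pow_eq_sum_factorial (α := Fin n) (ι := Fin q)).symm
      _ = _ := by simpa using sum_perm_comp_card_fixed (α := Fin n) (· ^ q)
  rw [← Nat.cast_inj (R := ℚ)] at hcount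
  push_cast at hcount
  rw [hcount]
  refine sum_congr rfl fun k hk => ?_
  rw [choose_mul_numDerangements_eq_sum (by simpa [Nat.lt_succ_iff] using hk),
    ← truncated_sum_neg_one_pow_mul_choose_mul_choose_eq_pow (R := ℚ) k q, sum_mul_sum,
    sum_comm]
  refine sum_congr rfl fun l _ => sum_congr rfl fun i _ => ?_
  ring
end
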